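/- The group with presentation ⟨x, y, z | x^2 = y^{2n}, (xy)^2 = x^2, z^{kl} = 1, xzx^{-1} = z^r, yzy^{-1} = z^{-1}⟩, where n, k, l are pairwise relatively prime odd integers with n > k > l > 1 and r ≡ -1 (mod k), r ≡ 1 (mod l), contains a normal cyclic subgroup of order kl generated by z, with quotient isomorphic to Q_{8n}. -/

import Mathlib

/-- Relators for `Q(8n, k, l) = ⟨x, y, z | x² = y^(2n), (xy)² = x², z^(kl) = 1,
xzx⁻¹ = zʳ, yzy⁻¹ = z⁻¹⟩`, with generators `0 = x`, `1 = y`, `2 = z`. -/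
def qRels (n k l : ℕ) (r : ℤ) : Set (FreeGroup (Fin 3)) :=
  {FreeGroup.of 0 ^ 2 * (FreeGroup.of 1 ^ (2 * n))⁻¹,
   (FreeGroup.of 0 * FreeGroup.of 1) ^ 2 * (FreeGroup.of 0 ^ 2)⁻¹,
   FreeGroup.of 2 ^ (k * l),
   FreeGroup.of 0 * FreeGroup.of 2 * (FreeGroup.of 0)⁻¹ * (FreeGroup.of 2 ^ r)⁻¹,
   FreeGroup.of 1 * FreeGroup.of 2 * (FreeGroup.of 1)⁻¹ * FreeGroup.of 2}

/-- The group `Q(8n, k, l)`. -/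
abbrev QGrp (n k l : ℕ) (r : ℤ) := PresentedGroup (qRels n k l r)

/-- Relators for the generalized quaternion group
`Q_{8n} = ⟨x, y | x^(2n) = y², xyx = y⟩`, with generator `0 = x`, `1 = y`. -/
def quaternionRels (m : ℕ) : Set (FreeGroup (Fin 2)) :=
  {FreeGroup.of 0 ^ m * ((FreeGroup.of 1) ^ 2)⁻¹,
   FreeGroup.of 0 * FreeGroup.of 1 * FreeGroup.of 0 * (FreeGroup.of 1)⁻¹}


/-!
With `X`, `Y` the generators of `Q_{8n}`, the assignment `x ↦ Y`, `y ↦ X`, `z ↦ 1` defines `φ`,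
and `X ↦ y`, `Y ↦ x` defines a section of it, so `φ` is onto. Each generator conjugates `z` to
`z ^ a` with `a ∈ {r, -1, 1}`, and `a² ≡ 1 (mod kl)` (by the Chinese remainder theorem for `r`),
so `⟨z⟩` is normal; modulo `⟨z⟩` the section inverts `φ`, hence `ker φ = ⟨z⟩`. Finally `z` has
order exactly `kl`, as its image `1` in the model `ℤ/kl ⋊ (ℤ/kl)ˣ` (`x ↦ r`, `y ↦ -1`) shows.
-/

open Subgroup

section Conjugation

variable {G : Type*} [Group G]

theorem zpowers_zpow_eq_of_zpow_mul_self {z : G} {a : ℤ} (ha : z ^ (a * a) = z) :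
    zpowers (z ^ a) = zpowers z := by
  refine le_antisymm (zpowers_le.mpr (zpow_mem (mem_zpowers z) a)) (zpowers_le.mpr ?_)
  have h := zpow_mem (mem_zpowers (z ^ a)) a
  rwa [← zpow_mul, ha] at h

theorem mem_normalizer_zpowers_of_conj_eq_zpow {g z : G} {a : ℤ}
    (h : g * z * g⁻¹ = z ^ a) (ha : z ^ (a * a) = z) :
    g ∈ normalizer (zpowers z : Set G) := by
  rw [mem_normalizer_iff_map_conj_eq, MonoidHom.map_zpowers]
  change zpowers (g * z * g⁻¹) = zpowers z
  rw [h, zpowers_zpow_eq_of_zpow_mul_self ha]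

end Conjugation

theorem MonoidHom.ker_eq_of_comp_eq_mk' {G H : Type*} [Group G] [Group H] {N : Subgroup G}
    [N.Normal] (φ : G →* H) (θ : H →* G ⧸ N) (hθ : θ.comp φ = QuotientGroup.mk' N)
    (hN : N ≤ φ.ker) : φ.ker = N := by
  refine le_antisymm (fun g hg => ?_) hN
  rw [← QuotientGroup.ker_mk' N, ← hθ, MonoidHom.mem_ker, MonoidHom.comp_apply,
    MonoidHom.mem_ker.mp hg, map_one]

theorem PresentedGroup.lift_of_eq_one {α : Type*} {rels : Set (FreeGroup α)} {w : FreeGroup α}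
    (hw : w ∈ rels) : FreeGroup.lift PresentedGroup.of w = (1 : PresentedGroup rels) := by
  have : FreeGroup.lift PresentedGroup.of = PresentedGroup.mk rels :=
    FreeGroup.ext_hom _ _ fun _ => rfl
  rw [this, PresentedGroup.one_of_mem hw]

theorem Int.mul_self_modEq_one_of_dvd {k l : ℕ} {r : ℤ} (hrk : (k : ℤ) ∣ r + 1)
    (hrl : (l : ℤ) ∣ r - 1) (hkl : k.Coprime l) : r * r ≡ 1 [ZMOD (k * l : ℕ)] := by
  refine (Int.modEq_iff_dvd.mpr ?_).symm
  push_cast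
  exact (Nat.isCoprime_iff_coprime.mpr hkl).mul_dvd
    (hrk.trans ⟨r - 1, by ring⟩) (hrl.trans ⟨r + 1, by ring⟩)

section Relations

variable {G : Type*} [Group G] {n k l : ℕ} {r : ℤ}

structure QRelations (n k l : ℕ) (r : ℤ) (x y z : G) : Prop where
  sq_eq_pow : x ^ 2 = y ^ (2 * n)
  mul_sq : (x * y) ^ 2 = x ^ 2
  pow_eq_one : z ^ (k * l) = 1
  conj_x : x * z * x⁻¹ = z ^ r
  conj_y : y * z * y⁻¹ = z⁻¹

theorem lift_qRels_eq_one_iff (f : Fin 3 → G) :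
    (∀ w ∈ qRels n k l r, FreeGroup.lift f w = 1) ↔ QRelations n k l r (f 0) (f 1) (f 2) := by
  simp only [qRels, Set.mem_insert_iff, Set.mem_singleton_iff, forall_eq_or_imp, forall_eq,
    map_mul, map_pow, map_zpow, map_inv, FreeGroup.lift_apply_of, inv_inv,
    mul_eq_one_iff_eq_inv]
  exact ⟨fun ⟨h₁, h₂, h₃, h₄, h₅⟩ => ⟨h₁, h₂, h₃, h₄, h₅⟩,
    fun ⟨h₁, h₂, h₃, h₄, h₅⟩ => ⟨h₁, h₂, h₃, h₄, h₅⟩⟩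

theorem lift_quaternionRels_eq_one_iff {m : ℕ} (f : Fin 2 → G) :
    (∀ w ∈ quaternionRels m, FreeGroup.lift f w = 1) ↔
      f 0 ^ m = f 1 ^ 2 ∧ f 0 * f 1 * f 0 = f 1 := by
  simp only [quaternionRels, Set.mem_insert_iff, Set.mem_singleton_iff, forall_eq_or_imp,
    forall_eq, map_mul, map_pow, map_inv, FreeGroup.lift_apply_of, mul_inv_eq_one]

theorem QRelations.pow_eq_sq_and_mul_mul_eq {x y z : G} (h : QRelations n k l r x y z) :
    y ^ (2 * n) = x ^ 2 ∧ y * x * y = x := by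
  refine ⟨h.sq_eq_pow.symm, mul_left_cancel (a := x) ?_⟩
  calc x * (y * x * y) = (x * y) ^ 2 := by rw [sq]; group
    _ = x * x := by rw [h.mul_sq, sq]

theorem qRelations_one_of_pow_eq_sq {a b : G} (h₁ : a ^ (2 * n) = b ^ 2) (h₂ : a * b * a = b) :
    QRelations n k l r b a 1 where
  sq_eq_pow := h₁.symm
  mul_sq := by rw [sq, sq, mul_assoc, ← mul_assoc a, h₂]
  pow_eq_one := one_pow _
  conj_x := by group
  conj_y := by group

end Relations

section Presentations

variable {G : Type*} [Group G] {n k l : ℕ} {r : ℤ}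

theorem QGrp.qRelations_of :
    QRelations n k l r (PresentedGroup.of 0 : QGrp n k l r) (PresentedGroup.of 1)
      (PresentedGroup.of 2) :=
  (lift_qRels_eq_one_iff _).mp fun _ => PresentedGroup.lift_of_eq_one

theorem quaternion_relations_of {m : ℕ} :
    (PresentedGroup.of 0 : PresentedGroup (quaternionRels m)) ^ m = PresentedGroup.of 1 ^ 2 ∧
      PresentedGroup.of 0 * PresentedGroup.of 1 * PresentedGroup.of 0 =
        (PresentedGroup.of 1 : PresentedGroup (quaternionRels m)) :=
  (lift_quaternionRels_eq_one_iff _).mp fun _ => PresentedGroup.lift_of_eq_one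

def QGrp.lift {x y z : G} (h : QRelations n k l r x y z) : QGrp n k l r →* G :=
  PresentedGroup.toGroup ((lift_qRels_eq_one_iff ![x, y, z]).mpr h)

theorem QGrp.lift_of {x y z : G} (h : QRelations n k l r x y z) (i : Fin 3) :
    QGrp.lift h (PresentedGroup.of i) = ![x, y, z] i :=
  PresentedGroup.toGroup.of _

def quaternionLift {m : ℕ} {a b : G} (h₁ : a ^ m = b ^ 2) (h₂ : a * b * a = b) :
    PresentedGroup (quaternionRels m) →* G :=
  PresentedGroup.toGroup ((lift_quaternionRels_eq_one_iff ![a, b]).mpr ⟨h₁, h₂⟩)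

end Presentations

section Model

open SemidirectProduct

variable (R : Type*) [Ring R]

def unitsMulAut : Rˣ →* MulAut (Multiplicative R) where
  toFun u := AddEquiv.toMultiplicative (DistribMulAction.toAddAut Rˣ R u)
  map_one' := by ext; simp
  map_mul' u v := by ext; simp [mul_smul]

variable {R}

theorem unitsMulAut_apply (u : Rˣ) (a : R) :
    unitsMulAut R u (Multiplicative.ofAdd a) = Multiplicative.ofAdd (u * a) := by
  simp [unitsMulAut, Units.smul_def]

theorem qRelations_semidirectProduct {n k l : ℕ} {r : ℤ} {u : Rˣ} (hu : u * u = 1)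
    (hr : (r : R) = u) (hkl : ((k * l : ℕ) : R) = 0) :
    QRelations n k l r (inr u : Multiplicative R ⋊[unitsMulAut R] Rˣ) (inr (-1))
      (inl (Multiplicative.ofAdd 1)) where
  sq_eq_pow := by rw [← map_pow, ← map_pow, sq, hu, pow_mul, neg_one_sq, one_pow]
  mul_sq := by rw [← map_mul, ← map_pow, ← map_pow, mul_neg_one, neg_sq]
  pow_eq_one := by rw [← map_pow, ← ofAdd_nsmul, nsmul_one, hkl, ofAdd_zero, map_one]
  conj_x := by
    rw [← map_inv, ← inl_aut, unitsMulAut_apply, ← map_zpow, ← ofAdd_zsmul, zsmul_one, hr,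
      mul_one]
  conj_y := by
    rw [← map_inv, ← inl_aut, unitsMulAut_apply, ← map_inv, ← ofAdd_neg]
    simp

theorem SemidirectProduct.orderOf_inl_ofAdd_one {m : ℕ} {H : Type*} [Group H]
    {φ : H →* MulAut (Multiplicative (ZMod m))} :
    orderOf (inl (Multiplicative.ofAdd 1) : Multiplicative (ZMod m) ⋊[φ] H) = m := by
  rw [orderOf_injective _ inl_injective, orderOf_ofAdd_eq_addOrderOf, ZMod.addOrderOf_one]

end Model

namespace QGrp

variable {n k l : ℕ} {r : ℤ}

theorem orderOf_of_two (hr : r * r ≡ 1 [ZMOD (k * l : ℕ)]) :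
    orderOf (PresentedGroup.of 2 : QGrp n k l r) = k * l := by
  have hu : (r : ZMod (k * l)) * r = 1 := by
    exact_mod_cast (ZMod.intCast_eq_intCast_iff _ _ _).mpr hr
  let u := Units.mkOfMulEqOne _ _ hu
  let ψ := QGrp.lift (n := n) (qRelations_semidirectProduct (r := r) (u := u)
    (Units.ext hu) rfl (ZMod.natCast_self _))
  refine Nat.dvd_antisymm (orderOf_dvd_of_pow_eq_one qRelations_of.pow_eq_one) ?_
  calc k * l = orderOf (ψ (PresentedGroup.of 2)) := by
        rw [lift_of]
        exact SemidirectProduct.orderOf_inl_ofAdd_one.symm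
    _ ∣ _ := orderOf_map_dvd ψ _

theorem zpowers_of_two_normal (hr : r * r ≡ 1 [ZMOD (k * l : ℕ)]) :
    (Subgroup.zpowers (PresentedGroup.of 2 : QGrp n k l r)).Normal := by
  have hz : ∀ a : ℤ, a * a ≡ 1 [ZMOD (k * l : ℕ)] →
      (PresentedGroup.of 2 : QGrp n k l r) ^ (a * a) = PresentedGroup.of 2 := fun a ha =>
    (zpow_eq_zpow_iff_modEq.mpr (by rwa [orderOf_of_two hr])).trans (zpow_one _)
  rw [← normalizer_eq_top_iff, eq_top_iff]
  intro g _
  refine PresentedGroup.generated_by _ _ (fun i => ?_) g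
  fin_cases i
  · exact mem_normalizer_zpowers_of_conj_eq_zpow qRelations_of.conj_x (hz r hr)
  · exact mem_normalizer_zpowers_of_conj_eq_zpow
      (qRelations_of.conj_y.trans (zpow_neg_one _).symm) (hz (-1) (by norm_num))
  · exact mem_normalizer_zpowers_of_conj_eq_zpow
      ((mul_inv_cancel_right _ _).trans (zpow_one _).symm) (hz 1 rfl)

end QGrp

theorem qGrp_normal_cyclic_quotient_general (n k l : ℕ) (r : ℤ)
    (hcop : Nat.Coprime n k ∧ Nat.Coprime n l ∧ Nat.Coprime k l)
    (hrk : (k : ℤ) ∣ r + 1) (hrl : (l : ℤ) ∣ r - 1) :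
    ∃ φ : QGrp n k l r →* PresentedGroup (quaternionRels (2 * n)),
      Function.Surjective φ ∧
      φ.ker = Subgroup.zpowers (PresentedGroup.of 2) ∧
      Nat.card φ.ker = k * l := by
  have hr := Int.mul_self_modEq_one_of_dvd hrk hrl hcop.2.2
  have := QGrp.zpowers_of_two_normal (n := n) hr
  obtain ⟨hx, hy⟩ :=
    (QGrp.qRelations_of (n := n) (k := k) (l := l) (r := r)).pow_eq_sq_and_mul_mul_eq
  let φ := QGrp.lift (n := n) (k := k) (l := l) (r := r)
    (qRelations_one_of_pow_eq_sq quaternion_relations_of.1 quaternion_relations_of.2)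
  let χ := quaternionLift hx hy
  have hφχ : φ.comp χ = MonoidHom.id _ := by
    ext i
    fin_cases i <;> rfl
  have hker : φ.ker = zpowers (PresentedGroup.of 2) := by
    refine φ.ker_eq_of_comp_eq_mk' ((QuotientGroup.mk' _).comp χ) ?_
      (zpowers_le.mpr (QGrp.lift_of _ 2))
    ext i
    fin_cases i
    · rfl
    · rfl
    · exact ((QuotientGroup.eq_one_iff _).mpr (mem_zpowers _)).symm
  refine ⟨φ, fun q => ⟨χ q, DFunLike.congr_fun hφχ q⟩, hker, ?_⟩
  rw [hker, Nat.card_zpowers, QGrp.orderOf_of_two hr]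

/-- `Q(8n, k, l)` contains a normal cyclic subgroup of order `kl` generated by `z`,
with quotient isomorphic to `Q_{8n}`: there is a surjection onto `Q_{8n}` whose
kernel is the cyclic subgroup generated by `z`, of order `kl`. -/
theorem qGrp_normal_cyclic_quotient (n k l : ℕ) (r : ℤ)
    (hodd : Odd n ∧ Odd k ∧ Odd l)
    (hcop : Nat.Coprime n k ∧ Nat.Coprime n l ∧ Nat.Coprime k l)
    (hordered : 1 < l ∧ l < k ∧ k < n)
    (hrk : (k : ℤ) ∣ r + 1) (hrl : (l : ℤ) ∣ r - 1) :
    ∃ φ : QGrp n k l r →* PresentedGroup (quaternionRels (2 * n)),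
      Function.Surjective φ ∧
      φ.ker = Subgroup.zpowers (PresentedGroup.of 2) ∧
      Nat.card φ.ker = k * l :=
  qGrp_normal_cyclic_quotient_general n k l r hcop hrk hrl
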